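/- arXiv:1004.0904 — 2 statements merged into one kernel-verified Lean document; each statement's English description precedes it below -/
import Mathlib

section
/- Let a, c, d be integers with a·d − c ≠ 0. Then the matrix [[a, 1], [c, d]] is similar over ℤ to the matrix [[a+d, c−a·d], [1, 0]]; that is, there exists P ∈ GL₂(ℤ) with P⁻¹ · [[a, 1], [c, d]] · P = [[a+d, c−a·d], [1, 0]]. -/
namespace Matrix

variable {R : Type*} [CommRing R]

theorem det_fin_two_swap_shear (a : R) : (!![0, 1; 1, -a]).det = -1 := by
  simp [det_fin_two_of]

/-- In the basis `e₂, e₁ - a • e₂` the matrix `!![a, 1; c, d]` sends `e₂` to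
`(a + d) • e₂ + (e₁ - a • e₂)` and `e₁ - a • e₂` to `(c - a * d) • e₂`. -/
theorem fin_two_mul_swap_shear (a c d : R) :
    !![a, 1; c, d] * !![0, 1; 1, -a] = !![0, 1; 1, -a] * !![a + d, c - a * d; 1, 0] := by
  rw [mul_fin_two, mul_fin_two]
  simp [sub_eq_add_neg, mul_comm]

theorem exists_inv_mul_fin_two_mul_eq (a c d : R) :
    ∃ P : Matrix (Fin 2) (Fin 2) R, IsUnit P.det ∧
      P⁻¹ * !![a, 1; c, d] * P = !![a + d, c - a * d; 1, 0] := by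
  have hP : IsUnit (!![0, 1; 1, -a] : Matrix (Fin 2) (Fin 2) R).det := by
    rw [det_fin_two_swap_shear]
    exact isUnit_one.neg
  refine ⟨_, hP, ?_⟩
  rw [Matrix.mul_assoc, fin_two_mul_swap_shear, nonsing_inv_mul_cancel_left _ _ hP]

end Matrix

theorem stmt_2_general (a c d : ℤ) :
    ∃ P : Matrix (Fin 2) (Fin 2) ℤ, IsUnit P.det ∧
      P⁻¹ * !![a, 1; c, d] * P = !![a + d, c - a * d; 1, 0] :=
  Matrix.exists_inv_mul_fin_two_mul_eq a c d

/-- Corollary 1: the matrix `[[a,1],[c,d]]` with `a*d - c ≠ 0` is similar over `ℤ`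
to `[[a+d,c-a*d],[1,0]]`. -/
theorem stmt_2 (a c d : ℤ) (h : a * d - c ≠ 0) :
    ∃ P : Matrix (Fin 2) (Fin 2) ℤ, IsUnit P.det ∧
      P⁻¹ * !![a, 1; c, d] * P = !![a + d, c - a * d; 1, 0] :=
  stmt_2_general a c d
end

section
/- Let n ≥ 1 and let a, b, c, d be n×n real matrices satisfying aᵗ·d − cᵗ·b = I, aᵗ·c = cᵗ·a, and bᵗ·d = dᵗ·b (i.e., the block matrix [[a, b], [c, d]] is symplectic). Define the 2n×2n block matrices A = [[a, 0], [0, a]], B = [[0, b], [−b, 0]], C = [[0, −c], [c, 0]], D = [[d, 0], [0, d]]. Then the Rieffel–Schwarz conditions hold: Aᵗ·D + Cᵗ·B = I, Aᵗ·C + Cᵗ·A = 0, and Bᵗ·D + Dᵗ·B = 0; equivalently, the 4n×4n block matrix M = [[A, B], [C, D]] satisfies Mᵗ·Q·M = Q for Q = [[0, I_{2n}], [I_{2n}, 0]]. -/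
/-!
The block construction is the realification `x + i y ↦ [[x, y], [-y, x]]` split into its real
part `diagBlocks x = [[x, 0], [0, x]]` and imaginary part `skewBlocks y = [[0, y], [-y, 0]]`.
These multiply like `x` and `i y` (in particular `skewBlocks x * skewBlocks y = -diagBlocks (x y)`),
so each Rieffel–Schwarz condition collapses to one of the symplectic conditions on `a, b, c, d`.
The identity `MᵀQM = Q` is just the Rieffel–Schwarz conditions written blockwise.
-/

open Matrix

namespace Matrix

variable {m R : Type*}

section Ring

variable [Ring R]

def diagBlocks (x : Matrix m m R) : Matrix (m ⊕ m) (m ⊕ m) R := fromBlocks x 0 0 x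

def skewBlocks (y : Matrix m m R) : Matrix (m ⊕ m) (m ⊕ m) R := fromBlocks 0 y (-y) 0

@[simp] lemma diagBlocks_one [DecidableEq m] : diagBlocks (1 : Matrix m m R) = 1 :=
  fromBlocks_one

@[simp] lemma skewBlocks_zero : skewBlocks (0 : Matrix m m R) = 0 := by
  simp [skewBlocks]

lemma diagBlocks_add (x y : Matrix m m R) :
    diagBlocks x + diagBlocks y = diagBlocks (x + y) := by
  simp [diagBlocks, fromBlocks_add]

lemma skewBlocks_add (x y : Matrix m m R) :
    skewBlocks x + skewBlocks y = skewBlocks (x + y) := by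
  simp [skewBlocks, fromBlocks_add, add_comm]

lemma transpose_diagBlocks (x : Matrix m m R) : (diagBlocks x)ᵀ = diagBlocks xᵀ := by
  simp [diagBlocks, fromBlocks_transpose]

lemma transpose_skewBlocks (y : Matrix m m R) : (skewBlocks y)ᵀ = skewBlocks (-yᵀ) := by
  simp [skewBlocks, fromBlocks_transpose]

variable [Fintype m]

lemma diagBlocks_mul_diagBlocks (x y : Matrix m m R) :
    diagBlocks x * diagBlocks y = diagBlocks (x * y) := by
  simp [diagBlocks, fromBlocks_multiply]

lemma diagBlocks_mul_skewBlocks (x y : Matrix m m R) :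
    diagBlocks x * skewBlocks y = skewBlocks (x * y) := by
  simp [diagBlocks, skewBlocks, fromBlocks_multiply]

lemma skewBlocks_mul_diagBlocks (x y : Matrix m m R) :
    skewBlocks x * diagBlocks y = skewBlocks (x * y) := by
  simp [diagBlocks, skewBlocks, fromBlocks_multiply]

lemma skewBlocks_mul_skewBlocks (x y : Matrix m m R) :
    skewBlocks x * skewBlocks y = diagBlocks (-(x * y)) := by
  simp [diagBlocks, skewBlocks, fromBlocks_multiply]

end Ring

variable [CommRing R] [Fintype m] [DecidableEq m]

lemma transpose_fromBlocks_mul_swap_mul (A B C D : Matrix m m R) :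
    (fromBlocks A B C D)ᵀ * fromBlocks 0 1 1 0 * fromBlocks A B C D =
      fromBlocks (Aᵀ * C + Cᵀ * A) (Aᵀ * D + Cᵀ * B) (Aᵀ * D + Cᵀ * B)ᵀ
        (Bᵀ * D + Dᵀ * B) := by
  simp only [fromBlocks_transpose, fromBlocks_multiply, transpose_add, transpose_mul,
    transpose_transpose, mul_zero, mul_one, zero_add, add_zero]
  congr 1 <;> abel

lemma transpose_fromBlocks_mul_swap_mul_eq_swap {A B C D : Matrix m m R}
    (hAD : Aᵀ * D + Cᵀ * B = 1) (hAC : Aᵀ * C + Cᵀ * A = 0) (hBD : Bᵀ * D + Dᵀ * B = 0) :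
    (fromBlocks A B C D)ᵀ * fromBlocks 0 1 1 0 * fromBlocks A B C D = fromBlocks 0 1 1 0 := by
  rw [transpose_fromBlocks_mul_swap_mul, hAD, hAC, hBD, transpose_one]

end Matrix

theorem stmt_10_general (n : ℕ) (a b c d : Matrix (Fin n) (Fin n) ℝ)
    (h1 : aᵀ * d - cᵀ * b = 1) (h2 : aᵀ * c = cᵀ * a) (h3 : bᵀ * d = dᵀ * b)
    (A B C D : Matrix (Fin n ⊕ Fin n) (Fin n ⊕ Fin n) ℝ)
    (hA : A = Matrix.fromBlocks a 0 0 a) (hB : B = Matrix.fromBlocks 0 b (-b) 0)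
    (hC : C = Matrix.fromBlocks 0 (-c) c 0) (hD : D = Matrix.fromBlocks d 0 0 d) :
    (Aᵀ * D + Cᵀ * B = 1 ∧ Aᵀ * C + Cᵀ * A = 0 ∧ Bᵀ * D + Dᵀ * B = 0) ∧
    (Matrix.fromBlocks A B C D)ᵀ *
        Matrix.fromBlocks (0 : Matrix (Fin n ⊕ Fin n) (Fin n ⊕ Fin n) ℝ) 1 1 0 *
        Matrix.fromBlocks A B C D =
      Matrix.fromBlocks (0 : Matrix (Fin n ⊕ Fin n) (Fin n ⊕ Fin n) ℝ) 1 1 0 := by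
  obtain rfl : A = diagBlocks a := hA
  obtain rfl : B = skewBlocks b := hB
  obtain rfl : C = skewBlocks (-c) := hC.trans (by rw [skewBlocks, neg_neg])
  obtain rfl : D = diagBlocks d := hD
  have hRS : (diagBlocks a)ᵀ * diagBlocks d + (skewBlocks (-c))ᵀ * skewBlocks b = 1 ∧
      (diagBlocks a)ᵀ * skewBlocks (-c) + (skewBlocks (-c))ᵀ * diagBlocks a = 0 ∧
      (skewBlocks b)ᵀ * diagBlocks d + (diagBlocks d)ᵀ * skewBlocks b = 0 := by
    simp only [transpose_diagBlocks, transpose_skewBlocks, diagBlocks_mul_diagBlocks,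
      diagBlocks_mul_skewBlocks, skewBlocks_mul_diagBlocks, skewBlocks_mul_skewBlocks,
      diagBlocks_add, skewBlocks_add, transpose_neg, neg_neg, Matrix.mul_neg, Matrix.neg_mul,
      ← sub_eq_add_neg, h1, h2, h3, neg_add_cancel, diagBlocks_one, skewBlocks_zero, and_self]
  exact ⟨hRS, transpose_fromBlocks_mul_swap_mul_eq_swap hRS.1 hRS.2.1 hRS.2.2⟩

/-- Second proof of Lemma 7: a symplectic matrix `[[a,b],[c,d]]` gives rise, via the
block construction `A = [[a,0],[0,a]]`, `B = [[0,b],[−b,0]]`, `C = [[0,−c],[c,0]]`,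
`D = [[d,0],[0,d]]`, to a matrix satisfying the Rieffel–Schwarz conditions, i.e.
`AᵗD + CᵗB = I`, `AᵗC + CᵗA = 0`, `BᵗD + DᵗB = 0`, and equivalently
`MᵗQM = Q` for `M = [[A,B],[C,D]]` and `Q = [[0,I],[I,0]]`. -/
theorem stmt_10 (n : ℕ) (hn : 1 ≤ n) (a b c d : Matrix (Fin n) (Fin n) ℝ)
    (h1 : aᵀ * d - cᵀ * b = 1) (h2 : aᵀ * c = cᵀ * a) (h3 : bᵀ * d = dᵀ * b)
    (A B C D : Matrix (Fin n ⊕ Fin n) (Fin n ⊕ Fin n) ℝ)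
    (hA : A = Matrix.fromBlocks a 0 0 a) (hB : B = Matrix.fromBlocks 0 b (-b) 0)
    (hC : C = Matrix.fromBlocks 0 (-c) c 0) (hD : D = Matrix.fromBlocks d 0 0 d) :
    (Aᵀ * D + Cᵀ * B = 1 ∧ Aᵀ * C + Cᵀ * A = 0 ∧ Bᵀ * D + Dᵀ * B = 0) ∧
    (Matrix.fromBlocks A B C D)ᵀ *
        Matrix.fromBlocks (0 : Matrix (Fin n ⊕ Fin n) (Fin n ⊕ Fin n) ℝ) 1 1 0 *
        Matrix.fromBlocks A B C D =
      Matrix.fromBlocks (0 : Matrix (Fin n ⊕ Fin n) (Fin n ⊕ Fin n) ℝ) 1 1 0 :=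
  stmt_10_general n a b c d h1 h2 h3 A B C D hA hB hC hD
end
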